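/- Let (A, ρ) be a commutative seminormed *-algebra whose Gelfand spectrum Sp_ρ(A) is not compact, and A₁ its unitization with seminorm ρ₁(a,λ) = ρ(a) + |λ|. Then Sp_{ρ₁}(A₁) is homeomorphic to the one-point compactification of Sp_ρ(A). -/

import Mathlib

/-!
Adjoining the zero functional to `Sp_ρ(A)` gives the set of all `ρ`-bounded `*`-homomorphisms
`A → 𝕜`. It is closed in `∏ₐ closedBall 0 (ρ a)`, hence compact Hausdorff by Tychonoff, and `Sp_ρ(A)`
is the complement of the single point `0` in it; so it is the one-point compactification of
`Sp_ρ(A)`, with `0` as the point at infinity. By the universal property of the unitization,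
restriction to `A` identifies `Sp_{ρ₁}(A₁)` homeomorphically with this set, `∞̂` going to `0`.
-/

open Set Topology

theorem NonUnitalStarAlgHom.isClosed_range_coe (R A B : Type*) [Monoid R]
    [NonUnitalNonAssocSemiring A] [DistribMulAction R A] [Star A]
    [NonUnitalNonAssocSemiring B] [DistribMulAction R B] [Star B]
    [TopologicalSpace B] [T2Space B] [ContinuousAdd B] [ContinuousMul B]
    [ContinuousConstSMul R B] [ContinuousStar B] :
    IsClosed (range ((⇑) : (A →⋆ₙₐ[R] B) → A → B)) := by
  refine isClosed_of_closure_subset fun f hf => ?_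
  have closed_star : IsClosed {f : A → B | ∀ x, f (star x) = star (f x)} := by
    simp only [ofPred_forall]
    exact isClosed_iInter fun x => isClosed_eq (continuous_apply _) (continuous_apply x).star
  let g : A →⋆ₙₐ[R] B :=
    { toFun := f
      map_smul' := (isClosed_setOfPred_map_smul A B (MonoidHom.id R)).closure_subset_iff.2
        (range_subset_iff.2 map_smul) hf
      map_zero' := (isClosed_setOfPred_map_zero A B).closure_subset_iff.2
        (range_subset_iff.2 map_zero) hf
      map_add' := (isClosed_setOfPred_map_add A B).closure_subset_iff.2
        (range_subset_iff.2 map_add) hf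
      map_mul' := (isClosed_setOfPred_map_mul A B).closure_subset_iff.2
        (range_subset_iff.2 map_mul) hf
      map_star' := closed_star.closure_subset_iff.2 (range_subset_iff.2 map_star) hf }
  exact ⟨g, rfl⟩

theorem StarAlgHom.unitization_apply {R A : Type*} [CommSemiring R] [StarRing R]
    [NonUnitalSemiring A] [StarRing A] [Module R A] [SMulCommClass R A A] [IsScalarTower R A A]
    (α : Unitization R A →⋆ₐ[R] R) (x : Unitization R A) : α x = α x.snd + x.fst := by
  conv_lhs => rw [← Unitization.starLift.apply_symm_apply α]
  exact add_comm _ _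

namespace GelfandSpectrum

variable (𝕜 : Type*) {A : Type*} [RCLike 𝕜] [NonUnitalSemiring A] [StarRing A] [Module 𝕜 A]

def characterSpace (ρ : A → ℝ) : Set (A → 𝕜) :=
  {φ | φ ≠ 0 ∧ (∃ α : A →⋆ₙₐ[𝕜] 𝕜, ⇑α = φ) ∧ ∀ a, ‖φ a‖ ≤ ρ a}

def boundedCharacters (ρ : A → ℝ) : Set (A → 𝕜) :=
  {φ | (∃ α : A →⋆ₙₐ[𝕜] 𝕜, ⇑α = φ) ∧ ∀ a, ‖φ a‖ ≤ ρ a}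

variable {𝕜} (ρ : A → ℝ)

theorem isCompact_boundedCharacters : IsCompact (boundedCharacters 𝕜 ρ) := by
  have closed_bound : IsClosed {φ : A → 𝕜 | ∀ a, ‖φ a‖ ≤ ρ a} := by
    simp only [ofPred_forall]
    exact isClosed_iInter fun a => isClosed_le (continuous_apply a).norm continuous_const
  have closed : IsClosed (boundedCharacters 𝕜 ρ) :=
    (NonUnitalStarAlgHom.isClosed_range_coe 𝕜 A 𝕜).inter closed_bound
  refine (isCompact_univ_pi fun a => isCompact_closedBall (0 : 𝕜) (ρ a)).of_isClosed_subset
    closed fun φ hφ => ?_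
  simpa using hφ.2

theorem zero_mem_boundedCharacters (hρ : ∀ a, 0 ≤ ρ a) : 0 ∈ boundedCharacters 𝕜 ρ :=
  ⟨⟨0, rfl⟩, by simpa using hρ⟩

theorem characterSpace_subset_boundedCharacters :
    characterSpace 𝕜 ρ ⊆ boundedCharacters 𝕜 ρ :=
  fun _ hφ => hφ.2

theorem range_inclusion_characterSpace (hρ : ∀ a, 0 ≤ ρ a) :
    range (inclusion (characterSpace_subset_boundedCharacters (𝕜 := 𝕜) ρ)) =
      {⟨0, zero_mem_boundedCharacters ρ hρ⟩}ᶜ := by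
  ext ⟨φ, hφ⟩
  simp [characterSpace, hφ.1, hφ.2]

noncomputable def onePointHomeomorphBoundedCharacters (hρ : ∀ a, 0 ≤ ρ a) :
    OnePoint (characterSpace 𝕜 ρ) ≃ₜ boundedCharacters 𝕜 ρ :=
  have := isCompact_iff_compactSpace.mp (isCompact_boundedCharacters (𝕜 := 𝕜) ρ)
  OnePoint.equivOfIsEmbeddingOfRangeEq _ _ (IsEmbedding.inclusion _)
    (range_inclusion_characterSpace ρ hρ)

section Unitization

variable [IsScalarTower 𝕜 A A] [SMulCommClass 𝕜 A A]

variable (𝕜) in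
def unitizationCharacterSpace (ρ : A → ℝ) : Set (Unitization 𝕜 A → 𝕜) :=
  {φ | (∃ α : Unitization 𝕜 A →⋆ₐ[𝕜] 𝕜, ⇑α = φ) ∧ ∀ x, ‖φ x‖ ≤ ρ x.snd + ‖x.fst‖}

theorem comp_inr_mem_boundedCharacters {ψ : Unitization 𝕜 A → 𝕜}
    (hψ : ψ ∈ unitizationCharacterSpace 𝕜 ρ) : (fun a : A => ψ a) ∈ boundedCharacters 𝕜 ρ := by
  obtain ⟨⟨α, rfl⟩, hbound⟩ := hψ
  exact ⟨⟨Unitization.starLift.symm α, rfl⟩, fun a => by simpa using hbound a⟩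

theorem mem_unitizationCharacterSpace_of_mem_boundedCharacters {φ : A → 𝕜}
    (hφ : φ ∈ boundedCharacters 𝕜 ρ) :
    (fun x : Unitization 𝕜 A => φ x.snd + x.fst) ∈ unitizationCharacterSpace 𝕜 ρ := by
  obtain ⟨⟨α, rfl⟩, hbound⟩ := hφ
  refine ⟨⟨Unitization.starLift α, funext fun x => ?_⟩, fun x => ?_⟩
  · exact add_comm _ _
  · exact (norm_add_le _ _).trans (by gcongr; exact hbound _)

noncomputable def unitizationCharacterSpaceHomeomorph :
    unitizationCharacterSpace 𝕜 ρ ≃ₜ boundedCharacters 𝕜 ρ where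
  toFun ψ := ⟨fun a => ψ.1 a, comp_inr_mem_boundedCharacters ρ ψ.2⟩
  invFun φ := ⟨fun x => φ.1 x.snd + x.fst,
    mem_unitizationCharacterSpace_of_mem_boundedCharacters ρ φ.2⟩
  left_inv ψ := by
    obtain ⟨_, ⟨α, rfl⟩, _⟩ := ψ
    exact Subtype.ext <| funext fun x => (α.unitization_apply x).symm
  right_inv φ := Subtype.ext <| funext fun a => by simp
  continuous_toFun := by
    refine .subtype_mk (continuous_pi fun a => ?_) _
    exact (continuous_apply _).comp continuous_subtype_val
  continuous_invFun := by
    refine .subtype_mk (continuous_pi fun x => ?_) _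
    exact ((continuous_apply _).comp continuous_subtype_val).add continuous_const

end Unitization

end GelfandSpectrum

theorem stmt7_general {𝕜 A : Type*} [RCLike 𝕜] [NonUnitalCommRing A] [StarRing A] [Module 𝕜 A]
    [IsScalarTower 𝕜 A A] [SMulCommClass 𝕜 A A]
    (ρ : A → ℝ)
    (hnonneg : ∀ a, 0 ≤ ρ a) :
    Nonempty
      (↥{φ : Unitization 𝕜 A → 𝕜 | (∃ α : Unitization 𝕜 A →⋆ₐ[𝕜] 𝕜, ⇑α = φ) ∧
          ∀ x : Unitization 𝕜 A, ‖φ x‖ ≤ ρ x.snd + ‖x.fst‖} ≃ₜ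
        OnePoint ↥{φ : A → 𝕜 | φ ≠ 0 ∧ (∃ α : A →⋆ₙₐ[𝕜] 𝕜, ⇑α = φ) ∧ ∀ a, ‖φ a‖ ≤ ρ a}) :=
  ⟨(GelfandSpectrum.unitizationCharacterSpaceHomeomorph ρ).trans
    (GelfandSpectrum.onePointHomeomorphBoundedCharacters ρ hnonneg).symm⟩

/-- for a commutative seminormed `*`-algebra `(A, ρ)` over `𝕜 = ℝ` or `ℂ` whose
Gelfand spectrum `Sp_ρ(A)` (nonzero `ρ`-continuous `*`-homomorphisms, topology of pointwise
convergence) is not compact, the spectrum of the unitization `A₁` with `ρ₁(a, λ) = ρ a + ‖λ‖` is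
homeomorphic to the one-point compactification of `Sp_ρ(A)`. -/
theorem stmt7 {𝕜 A : Type*} [RCLike 𝕜] [NonUnitalCommRing A] [StarRing A] [Module 𝕜 A]
    [IsScalarTower 𝕜 A A] [SMulCommClass 𝕜 A A] [StarModule 𝕜 A]
    (ρ : A → ℝ)
    (hnonneg : ∀ a, 0 ≤ ρ a)
    (hstar : ∀ a, ρ (star a) = ρ a)
    (hadd : ∀ a b, ρ (a + b) ≤ ρ a + ρ b)
    (hsmul : ∀ (r : 𝕜) (a : A), ρ (r • a) = ‖r‖ * ρ a)
    (hmul : ∀ a b, ρ (a * b) ≤ ρ a * ρ b)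
    (hnc : ¬ IsCompact
      {φ : A → 𝕜 | φ ≠ 0 ∧ (∃ α : A →⋆ₙₐ[𝕜] 𝕜, ⇑α = φ) ∧ ∀ a, ‖φ a‖ ≤ ρ a}) :
    Nonempty
      (↥{φ : Unitization 𝕜 A → 𝕜 | (∃ α : Unitization 𝕜 A →⋆ₐ[𝕜] 𝕜, ⇑α = φ) ∧
          ∀ x : Unitization 𝕜 A, ‖φ x‖ ≤ ρ x.snd + ‖x.fst‖} ≃ₜ
        OnePoint ↥{φ : A → 𝕜 | φ ≠ 0 ∧ (∃ α : A →⋆ₙₐ[𝕜] 𝕜, ⇑α = φ) ∧ ∀ a, ‖φ a‖ ≤ ρ a}) :=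
  stmt7_general ρ hnonneg
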